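/- Let K: u -> A u + a and F: v -> B v + b be k-flats in R^d, where A, B have orthonormal columns, A^T B = diag(sigma_1, ..., sigma_k) with 0 <= sigma_i <= 1. Suppose x_F = A u_F + a in K and y_K = B v_K + b in F satisfy dist(x_F, y_K) = dist(F, K). Then for any point x = A u + a in K, dist(x, F)^2 = sum_{i=1}^k (1 - sigma_i^2) (u - u_F)_i^2 + dist(F, K)^2. -/

import Mathlib

open Matrix Metric

/-!
Completing the square in `v` gives `‖p - (B v + b)‖² = g + ‖v - Bᵀ (p - b)‖²` with
`g = ‖p - b‖² - ‖Bᵀ (p - b)‖²`, so `dist(p, F)² = g` is attained at `v = Bᵀ (p - b)`.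
For `p = A u + a` this is a quadratic in `u` whose quadratic part is `∑ (1 - σᵢ²) uᵢ²`,
because `AᵀA = 1` and `BᵀA = diag σ`. A closest pair makes `u_F` a minimiser of it with minimum
`dist(F, K)²`; the first-order condition kills the linear part of `g(u) - g(u_F)`.
-/

/-- View a plain vector of `ℝ^d` as a point of Euclidean space. -/
noncomputable def toEuc {d : ℕ} (v : Fin d → ℝ) : EuclideanSpace ℝ (Fin d) :=
  (WithLp.equiv 2 (Fin d → ℝ)).symm v

lemma infDist_eq_dist_of_forall_dist_le {α : Type*} [PseudoMetricSpace α] {x y : α} {s : Set α}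
    (hy : y ∈ s) (h : ∀ z ∈ s, dist x y ≤ dist x z) : infDist x s = dist x y :=
  le_antisymm (infDist_le_dist_of_mem hy) ((le_infDist ⟨y, hy⟩).2 h)

lemma eq_zero_of_forall_nonneg_quadratic {α β : ℝ} (h : ∀ t : ℝ, 0 ≤ α * t ^ 2 + β * t) :
    β = 0 := by
  have := discrim_le_zero (K := ℝ) (c := 0) fun t => by simpa [sq] using h t
  rw [discrim] at this
  nlinarith [sq_nonneg β]

lemma dist_toEuc_sq {d : ℕ} (x y : Fin d → ℝ) :
    dist (toEuc x) (toEuc y) ^ 2 = (x - y) ⬝ᵥ (x - y) := by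
  rw [EuclideanSpace.dist_eq, Real.sq_sqrt (by positivity)]
  simp [toEuc, dotProduct, Real.dist_eq, sq]

lemma mulVec_dotProduct_mulVec {l m n R : Type*} [Fintype l] [Fintype m] [Fintype n]
    [CommSemiring R] (A : Matrix l m R) (B : Matrix l n R) (x : m → R) (y : n → R) :
    (A *ᵥ x) ⬝ᵥ (B *ᵥ y) = x ⬝ᵥ ((Aᵀ * B) *ᵥ y) := by
  rw [← mulVec_mulVec, dotProduct_mulVec x, vecMul_transpose]

/-- The squared distance from `p` to the column space of `B`, provided the columns of `B` are
orthonormal. -/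
def sqDistToRange {m n : Type*} [Fintype m] [Fintype n] (B : Matrix m n ℝ) (p : m → ℝ) : ℝ :=
  p ⬝ᵥ p - (Bᵀ *ᵥ p) ⬝ᵥ (Bᵀ *ᵥ p)

section Flats

variable {m n : Type*} [Fintype m] [Fintype n] [DecidableEq n]

lemma dotProduct_self_sub_mulVec {B : Matrix m n ℝ} (hB : Bᵀ * B = 1) (p : m → ℝ) (v : n → ℝ) :
    (p - B *ᵥ v) ⬝ᵥ (p - B *ᵥ v) =
      sqDistToRange B p + (v - Bᵀ *ᵥ p) ⬝ᵥ (v - Bᵀ *ᵥ p) := by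
  have hpB : p ⬝ᵥ (B *ᵥ v) = (Bᵀ *ᵥ p) ⬝ᵥ v := by
    rw [dotProduct_mulVec, ← mulVec_transpose]
  have hBB : (B *ᵥ v) ⬝ᵥ (B *ᵥ v) = v ⬝ᵥ v := by
    rw [mulVec_dotProduct_mulVec, hB, one_mulVec]
  simp only [sqDistToRange, sub_dotProduct, dotProduct_sub, hBB, hpB,
    dotProduct_comm (B *ᵥ v) p, dotProduct_comm v (Bᵀ *ᵥ p)]
  ring

lemma sqDistToRange_add_mulVec {A B : Matrix m n ℝ} {σ : n → ℝ} (hA : Aᵀ * A = 1)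
    (hdiag : Aᵀ * B = diagonal σ) (r : m → ℝ) (h : n → ℝ) :
    sqDistToRange B (r + A *ᵥ h) =
      sqDistToRange B r + 2 * ((Aᵀ *ᵥ r - σ * (Bᵀ *ᵥ r)) ⬝ᵥ h) +
        ∑ i, (1 - σ i ^ 2) * h i ^ 2 := by
  have hBA : Bᵀ *ᵥ (A *ᵥ h) = σ * h := by
    have : Bᵀ * A = diagonal σ := by simpa [transpose_mul] using congrArg transpose hdiag
    ext i
    rw [mulVec_mulVec, this, mulVec_diagonal, Pi.mul_apply]
  have hrA : r ⬝ᵥ (A *ᵥ h) = (Aᵀ *ᵥ r) ⬝ᵥ h := by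
    rw [dotProduct_mulVec, ← mulVec_transpose]
  have hAA : (A *ᵥ h) ⬝ᵥ (A *ᵥ h) = h ⬝ᵥ h := by
    rw [mulVec_dotProduct_mulVec, hA, one_mulVec]
  have hσs : (Bᵀ *ᵥ r) ⬝ᵥ (σ * h) = (σ * (Bᵀ *ᵥ r)) ⬝ᵥ h :=
    Finset.sum_congr rfl fun i _ => by simp only [Pi.mul_apply]; ring
  have hσh : h ⬝ᵥ h - (σ * h) ⬝ᵥ (σ * h) = ∑ i, (1 - σ i ^ 2) * h i ^ 2 := by
    simp only [dotProduct, Pi.mul_apply, ← Finset.sum_sub_distrib]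
    exact Finset.sum_congr rfl fun i _ => by ring
  simp only [sqDistToRange, mulVec_add, hBA, add_dotProduct, dotProduct_add, hrA, hAA,
    dotProduct_comm (A *ᵥ h) r, dotProduct_comm (σ * h) (Bᵀ *ᵥ r), hσs, sub_dotProduct]
  linear_combination hσh

lemma sqDistToRange_eq_add_of_forall_le {A B : Matrix m n ℝ} {σ : n → ℝ} (hA : Aᵀ * A = 1)
    (hdiag : Aᵀ * B = diagonal σ) (c : m → ℝ) {u₀ : n → ℝ}
    (hmin : ∀ u, sqDistToRange B (A *ᵥ u₀ + c) ≤ sqDistToRange B (A *ᵥ u + c)) (u : n → ℝ) :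
    sqDistToRange B (A *ᵥ u + c) =
      ∑ i, (1 - σ i ^ 2) * (u i - u₀ i) ^ 2 + sqDistToRange B (A *ᵥ u₀ + c) := by
  set r := A *ᵥ u₀ + c
  have hshift (h : n → ℝ) : A *ᵥ (u₀ + h) + c = r + A *ᵥ h := by rw [mulVec_add, add_right_comm]
  have hgrad : (Aᵀ *ᵥ r - σ * (Bᵀ *ᵥ r)) ⬝ᵥ (u - u₀) = 0 := by
    suffices 2 * ((Aᵀ *ᵥ r - σ * (Bᵀ *ᵥ r)) ⬝ᵥ (u - u₀)) = 0 by linarith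
    refine eq_zero_of_forall_nonneg_quadratic
      (α := ∑ i, (1 - σ i ^ 2) * (u i - u₀ i) ^ 2) fun t => ?_
    have := hmin (u₀ + t • (u - u₀))
    rw [hshift, sqDistToRange_add_mulVec hA hdiag] at this
    simp only [dotProduct_smul, smul_eq_mul, Pi.smul_apply, Pi.sub_apply, mul_pow,
      mul_left_comm _ (t ^ 2), ← Finset.mul_sum] at this
    linarith
  have := sqDistToRange_add_mulVec hA hdiag r (u - u₀)
  rw [← hshift, add_sub_cancel, hgrad] at this
  simpa [Pi.sub_apply, add_comm] using this

end Flats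

lemma infDist_toEuc_flat_sq {d k : ℕ} {B : Matrix (Fin d) (Fin k) ℝ} (hB : Bᵀ * B = 1)
    (p b : Fin d → ℝ) :
    infDist (toEuc p) {y | ∃ v : Fin k → ℝ, y = toEuc (B *ᵥ v + b)} ^ 2 =
      sqDistToRange B (p - b) := by
  have hdist (v : Fin k → ℝ) : dist (toEuc p) (toEuc (B *ᵥ v + b)) ^ 2 =
      sqDistToRange B (p - b) + (v - Bᵀ *ᵥ (p - b)) ⬝ᵥ (v - Bᵀ *ᵥ (p - b)) := by
    rw [dist_toEuc_sq, ← dotProduct_self_sub_mulVec hB, sub_add_eq_sub_sub_swap]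
  have hfoot : dist (toEuc p) (toEuc (B *ᵥ (Bᵀ *ᵥ (p - b)) + b)) ^ 2 =
      sqDistToRange B (p - b) := by
    rw [hdist, sub_self, zero_dotProduct, add_zero]
  have hmem (v : Fin k → ℝ) : toEuc (B *ᵥ v + b) ∈ {y | ∃ v, y = toEuc (B *ᵥ v + b)} := ⟨v, rfl⟩
  rw [infDist_eq_dist_of_forall_dist_le (hmem _) ?_, hfoot]
  rintro _ ⟨v, rfl⟩
  rw [← pow_le_pow_iff_left₀ dist_nonneg dist_nonneg two_ne_zero, hfoot, hdist]
  exact le_add_of_nonneg_right (Finset.sum_nonneg fun i _ => mul_self_nonneg _)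

theorem stmt6_general {d k : ℕ} (A B : Matrix (Fin d) (Fin k) ℝ)
    (a b : Fin d → ℝ)
    (hA : Aᵀ * A = 1) (hB : Bᵀ * B = 1)
    (σ : Fin k → ℝ)
    (hdiag : Aᵀ * B = Matrix.diagonal σ)
    (K F : Set (EuclideanSpace ℝ (Fin d)))
    (hK : K = {x | ∃ u : Fin k → ℝ, x = toEuc (A *ᵥ u + a)})
    (hF : F = {y | ∃ v : Fin k → ℝ, y = toEuc (B *ᵥ v + b)})
    (uF vK : Fin k → ℝ)
    (hclosest : ∀ x ∈ K, ∀ y ∈ F,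
      dist (toEuc (A *ᵥ uF + a)) (toEuc (B *ᵥ vK + b)) ≤ dist x y) :
    ∀ u : Fin k → ℝ,
      (infDist (toEuc (A *ᵥ u + a)) F) ^ 2 =
        (∑ i, (1 - σ i ^ 2) * (u i - uF i) ^ 2) +
          (dist (toEuc (A *ᵥ uF + a)) (toEuc (B *ᵥ vK + b))) ^ 2 := by
  subst hK hF
  have memK (u : Fin k → ℝ) : toEuc (A *ᵥ u + a) ∈ {x | ∃ u, x = toEuc (A *ᵥ u + a)} := ⟨u, rfl⟩
  have memF (v : Fin k → ℝ) : toEuc (B *ᵥ v + b) ∈ {y | ∃ v, y = toEuc (B *ᵥ v + b)} := ⟨v, rfl⟩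
  have hsq (u : Fin k → ℝ) : infDist (toEuc (A *ᵥ u + a))
      {y | ∃ v, y = toEuc (B *ᵥ v + b)} ^ 2 = sqDistToRange B (A *ᵥ u + (a - b)) := by
    rw [infDist_toEuc_flat_sq hB, add_sub_assoc]
  have hD : dist (toEuc (A *ᵥ uF + a)) (toEuc (B *ᵥ vK + b)) =
      infDist (toEuc (A *ᵥ uF + a)) {y | ∃ v, y = toEuc (B *ᵥ v + b)} :=
    (infDist_eq_dist_of_forall_dist_le (memF vK) (hclosest _ (memK uF))).symm
  have hmin (u : Fin k → ℝ) :
      sqDistToRange B (A *ᵥ uF + (a - b)) ≤ sqDistToRange B (A *ᵥ u + (a - b)) := by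
    rw [← hsq, ← hsq, ← hD]
    exact pow_le_pow_left₀ dist_nonneg ((le_infDist ⟨_, memF vK⟩).2 (hclosest _ (memK u))) 2
  intro u
  rw [hD, hsq, hsq, sqDistToRange_eq_add_of_forall_le hA hdiag _ hmin]

/-- distance formula between a point of the flat `K : u ↦ Au + a`
and the flat `F : v ↦ Bv + b`, where `A, B` have orthonormal columns,
`Aᵀ B = diag σ` with `0 ≤ σ i ≤ 1`, `a ⊥ col A`, `b ⊥ col B`, and
`(x_F, y_K) ∈ K × F` realizes the distance between `F` and `K`. -/
theorem stmt6 {d k : ℕ} (A B : Matrix (Fin d) (Fin k) ℝ)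
    (a b : Fin d → ℝ)
    (hA : Aᵀ * A = 1) (hB : Bᵀ * B = 1)
    (σ : Fin k → ℝ) (hσ0 : ∀ i, 0 ≤ σ i) (hσ1 : ∀ i, σ i ≤ 1)
    (hdiag : Aᵀ * B = Matrix.diagonal σ)
    (ha : Aᵀ *ᵥ a = 0) (hb : Bᵀ *ᵥ b = 0)
    (K F : Set (EuclideanSpace ℝ (Fin d)))
    (hK : K = {x | ∃ u : Fin k → ℝ, x = toEuc (A *ᵥ u + a)})
    (hF : F = {y | ∃ v : Fin k → ℝ, y = toEuc (B *ᵥ v + b)})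
    (uF vK : Fin k → ℝ)
    (hclosest : ∀ x ∈ K, ∀ y ∈ F,
      dist (toEuc (A *ᵥ uF + a)) (toEuc (B *ᵥ vK + b)) ≤ dist x y) :
    ∀ u : Fin k → ℝ,
      (infDist (toEuc (A *ᵥ u + a)) F) ^ 2 =
        (∑ i, (1 - σ i ^ 2) * (u i - uF i) ^ 2) +
          (dist (toEuc (A *ᵥ uF + a)) (toEuc (B *ᵥ vK + b))) ^ 2 :=
  stmt6_general A B a b hA hB σ hdiag K F hK hF uF vK hclosest
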